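/- arXiv:2210.12916 — 8 statements merged into one kernel-verified Lean document; each statement's English description precedes it below -/
import Mathlib

section
/- For every channel C from a finite nonempty type X to a finite nonempty type Y and every full-support prior π on X, the multiplicative Bayes capacity of C is bounded above by the lift: ∑_y max_x C x y ≤ Lift(π, C). -/
open Finset

variable {X Y W : Type*}

/-- Output marginal p(y) = ∑_x π x * C x y. -/
noncomputable def marginal [Fintype X] (π : X → ℝ) (C : X → Y → ℝ) (y : Y) : ℝ :=
  ∑ x, π x * C x y

/-- Lift(π, C): max over pairs (x, y) with π x * C x y > 0 of C x y / p(y). -/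
noncomputable def Lift [Fintype X] (π : X → ℝ) (C : X → Y → ℝ) : ℝ :=
  sSup {r : ℝ | ∃ x y, 0 < π x * C x y ∧ r = C x y / marginal π C y}

/-- Lift capacity: the sup over all full-support priors π of Lift(π, C). -/
noncomputable def MaxLift [Fintype X] (C : X → Y → ℝ) : ℝ :=
  sSup {r : ℝ | ∃ π : X → ℝ, (∀ x, 0 < π x) ∧ (∑ x, π x = 1) ∧ r = Lift π C}

/-- Prior g-vulnerability V_g(π) = max_w ∑_x π x * g w x. -/
noncomputable def Vg [Fintype X] [Fintype W] [Nonempty W] (g : W → X → ℝ) (π : X → ℝ) : ℝ :=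
  Finset.univ.sup' Finset.univ_nonempty fun w => ∑ x, π x * g w x

/-- Max-case posterior g-vulnerability: max over y with p(y) > 0 of V_g(δ^y). -/
noncomputable def VgMax [Fintype X] [Fintype W] [Nonempty W]
    (g : W → X → ℝ) (π : X → ℝ) (C : X → Y → ℝ) : ℝ :=
  sSup {r : ℝ | ∃ y, 0 < marginal π C y ∧
    r = Vg g (fun x => π x * C x y / marginal π C y)}

/-- Average-case posterior g-vulnerability V_g⟨π, C⟩ = ∑_y max_w ∑_x π x * C x y * g w x. -/
noncomputable def VgPost [Fintype X] [Fintype Y] [Fintype W] [Nonempty W]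
    (g : W → X → ℝ) (π : X → ℝ) (C : X → Y → ℝ) : ℝ :=
  ∑ y, Finset.univ.sup' Finset.univ_nonempty fun w => ∑ x, π x * C x y * g w x

/-- Bayes capacity is bounded above by lift, for any full-support prior. -/
theorem bayes_capacity_le_lift {X Y : Type*} [Fintype X] [Nonempty X] [Fintype Y] [Nonempty Y]
    (C : X → Y → ℝ) (hC0 : ∀ x y, 0 ≤ C x y) (hC1 : ∀ x, ∑ y, C x y = 1)
    (π : X → ℝ) (hπpos : ∀ x, 0 < π x) (hπ1 : ∑ x, π x = 1) :
    (∑ y, Finset.univ.sup' Finset.univ_nonempty fun x => C x y) ≤ Lift π C := by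
  classical
  have hm0 : ∀ y, 0 ≤ marginal π C y := fun y =>
    Finset.sum_nonneg fun x _ => mul_nonneg (hπpos x).le (hC0 x y)
  have hmle : ∀ x y, π x * C x y ≤ marginal π C y := fun x y =>
    Finset.single_le_sum (fun x _ => mul_nonneg (hπpos x).le (hC0 x y)) (mem_univ x)
  have hbdd : BddAbove {r : ℝ | ∃ x y, 0 < π x * C x y ∧ r = C x y / marginal π C y} := by
    refine ⟨univ.sup' univ_nonempty fun x => (π x)⁻¹, ?_⟩
    rintro r ⟨x, y, hpos, rfl⟩
    have hCy : 0 < C x y := by nlinarith [hπpos x, hC0 x y]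
    have h1 : C x y / marginal π C y ≤ C x y / (π x * C x y) :=
      div_le_div_of_nonneg_left (hC0 x y) hpos (hmle x y)
    have h2 : C x y / (π x * C x y) = (π x)⁻¹ := by
      rw [mul_comm (π x) (C x y), ← div_div, div_self hCy.ne', one_div]
    calc C x y / marginal π C y ≤ (π x)⁻¹ := by rw [← h2]; exact h1
      _ ≤ _ := Finset.le_sup' (fun x => (π x)⁻¹) (mem_univ x)
  have hkey : ∀ x y, 0 < C x y → C x y / marginal π C y ≤ Lift π C := fun x y h =>
    le_csSup hbdd ⟨x, y, mul_pos (hπpos x) h, rfl⟩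
  obtain ⟨x0⟩ := ‹Nonempty X›
  have hex : ∃ y, 0 < C x0 y := by
    by_contra h
    push_neg at h
    have : ∑ y, C x0 y = 0 := Finset.sum_eq_zero fun y _ => le_antisymm (h y) (hC0 x0 y)
    rw [hC1 x0] at this; norm_num at this
  obtain ⟨y0, hy0⟩ := hex
  have hLpos : 0 < Lift π C := by
    have hm : 0 < marginal π C y0 := lt_of_lt_of_le (mul_pos (hπpos x0) hy0) (hmle x0 y0)
    exact lt_of_lt_of_le (div_pos hy0 hm) (hkey x0 y0 hy0)
  have hsum : ∑ y, marginal π C y = 1 := by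
    unfold marginal
    rw [Finset.sum_comm]
    simp_rw [← Finset.mul_sum, hC1, mul_one]
    exact hπ1
  calc (∑ y, Finset.univ.sup' Finset.univ_nonempty fun x => C x y)
      ≤ ∑ y, Lift π C * marginal π C y := by
        refine Finset.sum_le_sum fun y _ => ?_
        obtain ⟨x1, -, hx1⟩ := Finset.exists_mem_eq_sup' univ_nonempty fun x => C x y
        rw [hx1]
        rcases (hC0 x1 y).lt_or_eq with h | h
        · have hm : 0 < marginal π C y := lt_of_lt_of_le (mul_pos (hπpos x1) h) (hmle x1 y)
          have := hkey x1 y h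
          rw [div_le_iff₀ hm] at this
          linarith
        · rw [← h]
          exact mul_nonneg hLpos.le (hm0 y)
    _ = Lift π C * ∑ y, marginal π C y := by rw [Finset.mul_sum]
    _ = Lift π C := by rw [hsum, mul_one]
end

section
/- Let π be a full-support prior on a finite nonempty type X and C a channel from X to a finite nonempty type Y. Take the action set W = X and the gain function g_π defined by g_π w x = 1/(π x) if w = x and g_π w x = 0 otherwise. Then V_{g_π}(π) = 1 and the max-case posterior g_π-vulnerability satisfies V_{g_π}^max⟨π, C⟩ = Lift(π, C); consequently the max-case multiplicative g_π-leakage MaxLeak_{g_π}(π, C) equals Lift(π, C). -/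
open Finset

variable {X Y W : Type*}

private lemma aux_div (a b c : ℝ) (ha : a ≠ 0) (hc : c ≠ 0) :
    a * b / c / a = b / c := by
  field_simp

/-- Lift is realised as a max-case g-leakage by the prior-reciprocal gain function. -/
theorem lift_as_max_case_g_leakage {X Y : Type*} [Fintype X] [Nonempty X] [DecidableEq X]
    [Fintype Y] [Nonempty Y]
    (C : X → Y → ℝ) (hC0 : ∀ x y, 0 ≤ C x y) (hC1 : ∀ x, ∑ y, C x y = 1)
    (π : X → ℝ) (hπpos : ∀ x, 0 < π x) (hπ1 : ∑ x, π x = 1) :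
    Vg (fun w x => if w = x then 1 / π x else 0) π = 1 ∧
    VgMax (fun w x => if w = x then 1 / π x else 0) π C = Lift π C ∧
    VgMax (fun w x => if w = x then 1 / π x else 0) π C /
      Vg (fun w x => if w = x then 1 / π x else 0) π = Lift π C := by
  classical
  set g : X → X → ℝ := fun w x => if w = x then 1 / π x else 0 with hg
  have hπne : ∀ x, π x ≠ 0 := fun x => (hπpos x).ne'
  set p : Y → ℝ := marginal π C with hp
  -- sums against g collapse
  have hsum : ∀ (q : X → ℝ) (w : X), ∑ x, q x * g w x = q w / π w := by
    intro q w
    rw [hg]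
    simp only [mul_ite, mul_zero, mul_one_div]
    rw [Finset.sum_ite_eq]
    simp
  have hVg : ∀ q : X → ℝ,
      Vg g q = Finset.univ.sup' Finset.univ_nonempty fun w => q w / π w := by
    intro q
    unfold Vg
    exact Finset.sup'_congr _ rfl (fun w _ => hsum q w)
  have hVg1 : Vg g π = 1 := by
    rw [hVg]
    have h1 : ∀ w ∈ Finset.univ, π w / π w = (fun _ : X => (1 : ℝ)) w :=
      fun w _ => div_self (hπne w)
    rw [Finset.sup'_congr Finset.univ_nonempty rfl h1]
    exact Finset.sup'_const _ 1
  -- positivity of marginal from a positive term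
  have hCnn : ∀ y, ∀ x ∈ Finset.univ, 0 ≤ π x * C x y :=
    fun y x _ => mul_nonneg (hπpos x).le (hC0 x y)
  have hpge : ∀ x y, π x * C x y ≤ p y := fun x y =>
    Finset.single_le_sum (hCnn y) (Finset.mem_univ x)
  have hp_of : ∀ x y, 0 < π x * C x y → 0 < p y :=
    fun x y h => lt_of_lt_of_le h (hpge x y)
  have hex_of : ∀ y, 0 < p y → ∃ x, 0 < π x * C x y := by
    intro y hy
    by_contra h
    push_neg at h
    have : p y = 0 := by
      rw [hp]; unfold marginal
      exact Finset.sum_eq_zero fun x _ => le_antisymm (h x) (hCnn y x (Finset.mem_univ x))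
    linarith
  have hCpos : ∀ x y, 0 < π x * C x y → 0 < C x y := by
    intro x y h
    nlinarith [hC0 x y, hπpos x]
  -- the two sup sets
  set A : Set ℝ := {r : ℝ | ∃ x y, 0 < π x * C x y ∧ r = C x y / p y} with hA
  set B : Set ℝ := {r : ℝ | ∃ y, 0 < p y ∧
      r = Finset.univ.sup' Finset.univ_nonempty fun w => C w y / p y} with hB
  have hLift : Lift π C = sSup A := rfl
  have hVgMaxB : VgMax g π C = sSup B := by
    unfold VgMax
    congr 1
    ext r
    constructor
    · rintro ⟨y, hy, hr⟩
      refine ⟨y, hy, ?_⟩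
      rw [hr, hVg]
      refine Finset.sup'_congr _ rfl fun w _ => ?_
      exact aux_div (π w) (C w y) (p y) (hπne w) hy.ne'
    · rintro ⟨y, hy, hr⟩
      refine ⟨y, hy, ?_⟩
      rw [hr, hVg]
      exact (Finset.sup'_congr _ rfl fun w _ =>
        aux_div (π w) (C w y) (p y) (hπne w) hy.ne').symm
  have hBA : B ⊆ A := by
    rintro r ⟨y, hy, hr⟩
    obtain ⟨x, hx⟩ := hex_of y hy
    obtain ⟨w0, _, hw0⟩ := Finset.exists_mem_eq_sup' Finset.univ_nonempty
      (fun w => C w y / p y)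
    have hle : C x y / p y ≤ Finset.univ.sup' Finset.univ_nonempty fun w => C w y / p y :=
      Finset.le_sup' (fun w => C w y / p y) (Finset.mem_univ x)
    have hpos : 0 < C w0 y / p y := by
      rw [hw0] at hle
      exact lt_of_lt_of_le (div_pos (hCpos x y hx) hy) hle
    have hw0pos : 0 < C w0 y := by
      have := (div_pos_iff.mp hpos)
      rcases this with ⟨h1, _⟩ | ⟨_, h2⟩
      · exact h1
      · linarith
    exact ⟨w0, y, mul_pos (hπpos w0) hw0pos, by rw [hr, hw0]⟩
  have hAne : A.Nonempty := by
    obtain ⟨x⟩ := (inferInstance : Nonempty X)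
    have : ∃ y, 0 < C x y := by
      by_contra h
      push_neg at h
      have : ∑ y, C x y = 0 :=
        Finset.sum_eq_zero fun y _ => le_antisymm (h y) (hC0 x y)
      rw [hC1 x] at this
      linarith
    obtain ⟨y, hy⟩ := this
    exact ⟨C x y / p y, x, y, mul_pos (hπpos x) hy, rfl⟩
  set M : ℝ := Finset.univ.sup' Finset.univ_nonempty fun x => 1 / π x with hM
  have hAbdd : ∀ r ∈ A, r ≤ M := by
    rintro r ⟨x, y, hx, hr⟩
    have hpy : 0 < p y := hp_of x y hx
    have h1 : C x y / p y ≤ 1 / π x := by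
      rw [div_le_div_iff₀ hpy (hπpos x), one_mul, mul_comm]
      exact hpge x y
    exact hr ▸ le_trans h1 (Finset.le_sup' (fun x => 1 / π x) (Finset.mem_univ x))
  have hAbdd' : BddAbove A := ⟨M, hAbdd⟩
  have hBne : B.Nonempty := by
    obtain ⟨r, x, y, hx, _⟩ := hAne
    exact ⟨_, y, hp_of x y hx, rfl⟩
  have hmain : sSup B = sSup A := by
    apply le_antisymm
    · exact csSup_le_csSup hAbdd' hBne hBA
    · apply csSup_le hAne
      rintro r ⟨x, y, hx, hr⟩
      have hpy : 0 < p y := hp_of x y hx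
      have hb : (Finset.univ.sup' Finset.univ_nonempty fun w => C w y / p y) ∈ B :=
        ⟨y, hpy, rfl⟩
      refine le_trans ?_ (le_csSup (⟨M, fun b hb => hAbdd b (hBA hb)⟩) hb)
      rw [hr]
      exact Finset.le_sup' (fun w => C w y / p y) (Finset.mem_univ x)
  refine ⟨hVg1, ?_, ?_⟩
  · rw [hVgMaxB, hLift, hmain]
  · rw [hVg1, div_one, hVgMaxB, hLift, hmain]
end

section
/- For every channel C from a finite nonempty type X to a finite nonempty type Y, every full-support prior π on X, every finite nonempty action set W and every nonnegative gain function g : W → X → ℝ, the max-case posterior g-vulnerability is bounded by the lift times the prior g-vulnerability: V_g^max⟨π, C⟩ ≤ Lift(π, C) · V_g(π). In particular, if V_g(π) > 0, then MaxLeak_g(π, C) ≤ Lift(π, C). -/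
open Finset

variable {X Y W : Type*}

/-- Lift bounds the max-case g-leakage for any nonnegative gain function. -/
theorem lift_bounds_max_case_g_leakage {X Y W : Type*} [Fintype X] [Nonempty X]
    [Fintype Y] [Nonempty Y] [Fintype W] [Nonempty W]
    (C : X → Y → ℝ) (hC0 : ∀ x y, 0 ≤ C x y) (hC1 : ∀ x, ∑ y, C x y = 1)
    (π : X → ℝ) (hπpos : ∀ x, 0 < π x) (hπ1 : ∑ x, π x = 1)
    (g : W → X → ℝ) (hg : ∀ w x, 0 ≤ g w x) :
    VgMax g π C ≤ Lift π C * Vg g π ∧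
    (0 < Vg g π → VgMax g π C / Vg g π ≤ Lift π C) := by
  classical
  obtain ⟨x0, -, hx0⟩ := Finset.exists_min_image Finset.univ π Finset.univ_nonempty
  have hm : ∀ y, 0 ≤ marginal π C y := fun y =>
    Finset.sum_nonneg fun x _ => mul_nonneg (hπpos x).le (hC0 x y)
  have hbdd : BddAbove {r : ℝ | ∃ x y, 0 < π x * C x y ∧ r = C x y / marginal π C y} := by
    refine ⟨(π x0)⁻¹, ?_⟩
    rintro r ⟨x, y, hpos, rfl⟩
    have hCxy : 0 < C x y := by
      by_contra h
      push_neg at h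
      nlinarith [hπpos x]
    have hple : π x * C x y ≤ marginal π C y :=
      Finset.single_le_sum (fun x _ => mul_nonneg (hπpos x).le (hC0 x y)) (Finset.mem_univ x)
    have h1 : C x y / marginal π C y ≤ C x y / (π x * C x y) :=
      div_le_div_of_nonneg_left (hCxy.le) hpos hple
    have h2 : C x y / (π x * C x y) = (π x)⁻¹ := by
      field_simp [(hπpos x).ne', hCxy.ne']
    calc C x y / marginal π C y ≤ (π x)⁻¹ := by rw [← h2]; exact h1
      _ ≤ (π x0)⁻¹ := by
        apply inv_anti₀ (hπpos x0) (hx0 x (Finset.mem_univ x))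
  have hL0 : 0 ≤ Lift π C := by
    apply Real.sSup_nonneg
    rintro r ⟨x, y, hpos, rfl⟩
    exact div_nonneg (hC0 x y) (hm y)
  have hkey : ∀ x y, 0 < marginal π C y → C x y / marginal π C y ≤ Lift π C := by
    intro x y hpy
    rcases eq_or_lt_of_le (hC0 x y) with h | h
    · rw [← h]
      simpa using hL0
    · exact le_csSup hbdd ⟨x, y, mul_pos (hπpos x) h, rfl⟩
  have hVg0 : 0 ≤ Vg g π := by
    have := Finset.le_sup' (fun w => ∑ x, π x * g w x) (Finset.mem_univ (Classical.arbitrary W))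
    refine le_trans ?_ this
    exact Finset.sum_nonneg fun x _ => mul_nonneg (hπpos x).le (hg _ x)
  have hmain : VgMax g π C ≤ Lift π C * Vg g π := by
    apply Real.sSup_le
    · rintro r ⟨y, hpy, rfl⟩
      apply Finset.sup'_le
      intro w _
      have hstep : ∀ x, π x * C x y / marginal π C y * g w x ≤ Lift π C * (π x * g w x) := by
        intro x
        have h1 : π x * C x y / marginal π C y = π x * (C x y / marginal π C y) := by ring
        rw [h1]
        have h2 : π x * (C x y / marginal π C y) ≤ π x * Lift π C :=
          mul_le_mul_of_nonneg_left (hkey x y hpy) (hπpos x).le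
        calc π x * (C x y / marginal π C y) * g w x ≤ π x * Lift π C * g w x :=
              mul_le_mul_of_nonneg_right h2 (hg w x)
          _ = Lift π C * (π x * g w x) := by ring
      calc ∑ x, π x * C x y / marginal π C y * g w x
          ≤ ∑ x, Lift π C * (π x * g w x) := Finset.sum_le_sum fun x _ => hstep x
        _ = Lift π C * ∑ x, π x * g w x := by rw [Finset.mul_sum]
        _ ≤ Lift π C * Vg g π := by
            apply mul_le_mul_of_nonneg_left _ hL0
            exact Finset.le_sup' (fun w => ∑ x, π x * g w x) (Finset.mem_univ w)
    · exact mul_nonneg hL0 hVg0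
  refine ⟨hmain, fun h => ?_⟩
  rw [div_le_iff₀ h]
  linarith [hmain]
end

section
/- Let C be a channel from a finite nonempty type X to a finite nonempty type Y and let t be a real number with t ≥ 1. Then Lift(π, C) ≤ t holds for every full-support prior π on X if and only if C x y ≤ t · C x' y for all x, x' ∈ X and all y ∈ Y (i.e., C satisfies ε-local differential privacy with e^ε = t). -/
open Finset

variable {X Y W : Type*}

/-! The easy direction is an averaging argument: if `C x y ≤ t * C x' y` for every `x'`, then
`C x y ≤ t * p(y)` for every prior, so every ratio in the lift is at most `t`. Conversely, a lift
bound for a full-support prior `π` gives `C x y ≤ t * p_π(y)` whenever `C x y > 0`. Both sides are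
continuous in `π` and full-support priors are dense in the simplex, so the bound persists at the
point mass on `x'`, where `p(y) = C x' y`. -/

section Channel

variable [Fintype X] {π : X → ℝ} {C : X → Y → ℝ} {t : ℝ} {x : X} {y : Y}

theorem marginal_single [DecidableEq X] (x' : X) :
    marginal (Pi.single x' 1) C y = C x' y := by
  simp [marginal, Pi.single_apply]

theorem mul_le_marginal (hπ : ∀ x, 0 ≤ π x) (hC : ∀ x, 0 ≤ C x y) :
    π x * C x y ≤ marginal π C y :=
  single_le_sum (fun x' _ => mul_nonneg (hπ x') (hC x')) (mem_univ x)

theorem le_mul_marginal_of_forall_le_mul (hπ0 : ∀ x, 0 ≤ π x) (hπ1 : ∑ x, π x = 1)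
    (h : ∀ x', C x y ≤ t * C x' y) : C x y ≤ t * marginal π C y :=
  calc C x y = ∑ x', π x' * C x y := by rw [← sum_mul, hπ1, one_mul]
    _ ≤ ∑ x', π x' * (t * C x' y) :=
      sum_le_sum fun x' _ => mul_le_mul_of_nonneg_left (h x') (hπ0 x')
    _ = t * marginal π C y := by
      rw [marginal, mul_sum]
      exact sum_congr rfl fun x' _ => mul_left_comm _ _ _

theorem lift_le_of_forall_le_mul (ht : 0 ≤ t) (hπ0 : ∀ x, 0 ≤ π x) (hπ1 : ∑ x, π x = 1)
    (h : ∀ x x' y, C x y ≤ t * C x' y) : Lift π C ≤ t := by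
  refine Real.sSup_le ?_ ht
  rintro r ⟨x, y, hpos, rfl⟩
  have hCxy : 0 < C x y := pos_of_mul_pos_right hpos (hπ0 x)
  have hle : C x y ≤ t * marginal π C y := le_mul_marginal_of_forall_le_mul hπ0 hπ1 (h x · y)
  have hp : 0 < marginal π C y := pos_of_mul_pos_right (hCxy.trans_le hle) ht
  exact (div_le_iff₀ hp).2 hle

theorem bddAbove_lift_set (hπ : ∀ x, 0 < π x) (hC : ∀ x y, 0 ≤ C x y) :
    BddAbove {r : ℝ | ∃ x y, 0 < π x * C x y ∧ r = C x y / marginal π C y} := by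
  refine ⟨∑ x, (π x)⁻¹, ?_⟩
  rintro r ⟨x, y, hpos, rfl⟩
  have hCxy : 0 < C x y := pos_of_mul_pos_right hpos (hπ x).le
  calc C x y / marginal π C y ≤ C x y / (π x * C x y) :=
        div_le_div_of_nonneg_left hCxy.le hpos (mul_le_marginal (fun x => (hπ x).le) (hC · y))
    _ = (π x)⁻¹ := by field_simp
    _ ≤ ∑ x, (π x)⁻¹ := single_le_sum (fun x _ => (inv_pos.2 (hπ x)).le) (mem_univ x)

theorem div_marginal_le_lift (hπ : ∀ x, 0 < π x) (hC : ∀ x y, 0 ≤ C x y)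
    (hCxy : 0 < C x y) : C x y / marginal π C y ≤ Lift π C :=
  le_csSup (bddAbove_lift_set hπ hC) ⟨x, y, mul_pos (hπ x) hCxy, rfl⟩

theorem le_mul_marginal_of_lift_le (hπ : ∀ x, 0 < π x) (hC : ∀ x y, 0 ≤ C x y)
    (hlift : Lift π C ≤ t) (hCxy : 0 < C x y) :
    C x y ≤ t * marginal π C y := by
  have hp : 0 < marginal π C y :=
    (mul_pos (hπ x) hCxy).trans_le (mul_le_marginal (fun x => (hπ x).le) (hC · y))
  exact (div_le_iff₀ hp).1 ((div_marginal_le_lift hπ hC hCxy).trans hlift)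

end Channel

open Filter Topology in
theorem le_of_forall_fullSupport_prior [Fintype X] {f : (X → ℝ) → ℝ} {a : ℝ} (hf : Continuous f)
    (h : ∀ σ : X → ℝ, (∀ x, 0 < σ x) → ∑ x, σ x = 1 → a ≤ f σ)
    {π : X → ℝ} (hπ0 : ∀ x, 0 ≤ π x) (hπ1 : ∑ x, π x = 1) : a ≤ f π := by
  have : Nonempty X :=
    univ_nonempty_iff.1 (nonempty_of_sum_ne_zero (hπ1.trans_ne one_ne_zero))
  set u : X → ℝ := fun _ => (Fintype.card X : ℝ)⁻¹
  have hu0 : ∀ x, 0 < u x := fun _ => inv_pos.2 (Nat.cast_pos.2 Fintype.card_pos)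
  have hu1 : ∑ x, u x = 1 := by
    have hcard : (Fintype.card X : ℝ) ≠ 0 := Nat.cast_ne_zero.2 Fintype.card_ne_zero
    simp [u, hcard]
  let mix : ℝ → X → ℝ := fun s => (1 - s) • π + s • u
  have hlim : Tendsto (fun s => f (mix s)) (𝓝[>] 0) (𝓝 (f π)) := by
    have hcont : Continuous fun s => f (mix s) := hf.comp (by fun_prop)
    simpa [mix] using hcont.continuousWithinAt.tendsto (x := 0) (s := Set.Ioi 0)
  refine ge_of_tendsto hlim ?_
  filter_upwards [Ioc_mem_nhdsGT one_pos] with s ⟨hs0, hs1⟩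
  refine h (mix s) (fun x => ?_) ?_
  · simp only [mix, Pi.add_apply, Pi.smul_apply, smul_eq_mul]
    exact add_pos_of_nonneg_of_pos (mul_nonneg (by linarith) (hπ0 x)) (mul_pos hs0 (hu0 x))
  · simp only [mix, Pi.add_apply, Pi.smul_apply, smul_eq_mul, sum_add_distrib, ← mul_sum, hπ1, hu1]
    ring

theorem lift_le_iff_ldp_general {X Y : Type*} [Fintype X]
    (C : X → Y → ℝ) (hC0 : ∀ x y, 0 ≤ C x y)
    (t : ℝ) (ht : 1 ≤ t) :
    (∀ π : X → ℝ, (∀ x, 0 < π x) → (∑ x, π x = 1) → Lift π C ≤ t) ↔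
    (∀ x x' y, C x y ≤ t * C x' y) := by
  classical
  have ht0 : 0 ≤ t := zero_le_one.trans ht
  refine ⟨fun h x x' y => ?_, fun h π hπ hπ1 => lift_le_of_forall_le_mul ht0 (hπ · |>.le) hπ1 h⟩
  rcases (hC0 x y).eq_or_lt with hzero | hpos
  · rw [← hzero]
    exact mul_nonneg ht0 (hC0 x' y)
  · have hmarginal : Continuous fun π : X → ℝ => t * marginal π C y := by
      unfold marginal
      fun_prop
    have hsingle := le_of_forall_fullSupport_prior hmarginal
      (fun σ hσ hσ1 => le_mul_marginal_of_lift_le hσ hC0 (h σ hσ hσ1) hpos)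
      (π := Pi.single x' 1) (fun _ => by simp [Pi.single_apply, apply_ite]) (by simp)
    rwa [marginal_single] at hsingle

/-- Lift(π, C) ≤ t for all full-support priors π iff C satisfies ε-LDP with e^ε = t. -/
theorem lift_le_iff_ldp {X Y : Type*} [Fintype X] [Nonempty X] [Fintype Y] [Nonempty Y]
    (C : X → Y → ℝ) (hC0 : ∀ x y, 0 ≤ C x y) (hC1 : ∀ x, ∑ y, C x y = 1)
    (t : ℝ) (ht : 1 ≤ t) :
    (∀ π : X → ℝ, (∀ x, 0 < π x) → (∑ x, π x = 1) → Lift π C ≤ t) ↔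
    (∀ x x' y, C x y ≤ t * C x' y) :=
  lift_le_iff_ldp_general C hC0 t ht
end

section
/- Let C be a channel from a finite nonempty type X to a finite nonempty type Y all of whose entries are strictly positive. Then for every full-support prior π on X, every finite nonempty action set W and every nonnegative gain function g : W → X → ℝ, the max-case posterior g-vulnerability satisfies V_g^max⟨π, C⟩ ≤ MaxLift(C) · V_g(π), where MaxLift(C) is the supremum over all full-support priors π' of Lift(π', C). In particular, if V_g(π) > 0 then MaxLeak_g(π, C) ≤ MaxLift(C). -/
open Finset

variable {X Y W : Type*}

/-- The lift capacity (e^ε) bounds max-case g-leakage for every prior and gain function. -/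
theorem maxLift_bounds_max_case_g_leakage {X Y W : Type*} [Fintype X] [Nonempty X]
    [Fintype Y] [Nonempty Y] [Fintype W] [Nonempty W]
    (C : X → Y → ℝ) (hCpos : ∀ x y, 0 < C x y) (hC1 : ∀ x, ∑ y, C x y = 1)
    (π : X → ℝ) (hπpos : ∀ x, 0 < π x) (hπ1 : ∑ x, π x = 1)
    (g : W → X → ℝ) (hg : ∀ w x, 0 ≤ g w x) :
    VgMax g π C ≤ MaxLift C * Vg g π ∧
    (0 < Vg g π → VgMax g π C / Vg g π ≤ MaxLift C) := by
  classical
  set m := Finset.univ.inf' Finset.univ_nonempty (fun p : X × Y => C p.1 p.2) with hm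
  set M0 := Finset.univ.sup' Finset.univ_nonempty (fun p : X × Y => C p.1 p.2) with hM0
  have hmpos : 0 < m := by
    rw [hm, Finset.lt_inf'_iff]
    exact fun p _ => hCpos p.1 p.2
  have hmle : ∀ x y, m ≤ C x y := fun x y =>
    Finset.inf'_le _ (Finset.mem_univ ((x, y) : X × Y))
  have hleM0 : ∀ x y, C x y ≤ M0 := fun x y =>
    Finset.le_sup' (f := fun p : X × Y => C p.1 p.2) (Finset.mem_univ ((x, y) : X × Y))
  have hmarg : ∀ (π' : X → ℝ), (∀ x, 0 < π' x) → (∑ x, π' x = 1) →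
      ∀ y, m ≤ marginal π' C y := by
    intro π' hp hs y
    have : ∑ x, π' x * m ≤ ∑ x, π' x * C x y :=
      Finset.sum_le_sum fun x _ => mul_le_mul_of_nonneg_left (hmle x y) (hp x).le
    calc m = (∑ x, π' x) * m := by rw [hs, one_mul]
    _ = ∑ x, π' x * m := by rw [Finset.sum_mul]
    _ ≤ ∑ x, π' x * C x y := this
    _ = marginal π' C y := rfl
  have hratio : ∀ (π' : X → ℝ), (∀ x, 0 < π' x) → (∑ x, π' x = 1) →
      ∀ x y, C x y / marginal π' C y ≤ M0 / m := by
    intro π' hp hs x y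
    exact div_le_div₀ ((hCpos x y).le.trans (hleM0 x y)) (hleM0 x y) hmpos (hmarg π' hp hs y)
  have hM0m : 0 ≤ M0 / m := div_nonneg ((hCpos (Classical.arbitrary X) (Classical.arbitrary Y)).le.trans (hleM0 _ _)) hmpos.le
  have hLiftBdd : ∀ (π' : X → ℝ), (∀ x, 0 < π' x) → (∑ x, π' x = 1) →
      BddAbove {r : ℝ | ∃ x y, 0 < π' x * C x y ∧ r = C x y / marginal π' C y} := by
    intro π' hp hs
    exact ⟨M0 / m, fun r ⟨x, y, _, hr⟩ => hr ▸ hratio π' hp hs x y⟩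
  have hLiftle : ∀ (π' : X → ℝ), (∀ x, 0 < π' x) → (∑ x, π' x = 1) →
      Lift π' C ≤ M0 / m := by
    intro π' hp hs
    exact Real.sSup_le (fun r ⟨x, y, _, hr⟩ => hr ▸ hratio π' hp hs x y) hM0m
  have hMaxBdd : BddAbove {r : ℝ | ∃ π' : X → ℝ, (∀ x, 0 < π' x) ∧ (∑ x, π' x = 1) ∧ r = Lift π' C} :=
    ⟨M0 / m, fun r ⟨π', h1, h2, hr⟩ => hr ▸ hLiftle π' h1 h2⟩
  have hLiftleMax : Lift π C ≤ MaxLift C :=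
    le_csSup hMaxBdd ⟨π, hπpos, hπ1, rfl⟩
  have hLiftge : ∀ x y, C x y / marginal π C y ≤ Lift π C := by
    intro x y
    exact le_csSup (hLiftBdd π hπpos hπ1) ⟨x, y, mul_pos (hπpos x) (hCpos x y), rfl⟩
  have hmargpos : ∀ y, 0 < marginal π C y := fun y => lt_of_lt_of_le hmpos (hmarg π hπpos hπ1 y)
  have hLiftpos : 0 < Lift π C := by
    obtain ⟨x0⟩ := ‹Nonempty X›; obtain ⟨y0⟩ := ‹Nonempty Y›
    exact lt_of_lt_of_le (div_pos (hCpos x0 y0) (hmargpos y0)) (hLiftge x0 y0)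
  have hMaxpos : 0 < MaxLift C := lt_of_lt_of_le hLiftpos hLiftleMax
  have hVg0 : 0 ≤ Vg g π := by
    obtain ⟨w0⟩ := ‹Nonempty W›
    refine le_trans ?_ (Finset.le_sup' (fun w => ∑ x, π x * g w x) (Finset.mem_univ w0))
    exact Finset.sum_nonneg fun x _ => mul_nonneg (hπpos x).le (hg w0 x)
  have key : VgMax g π C ≤ MaxLift C * Vg g π := by
    apply Real.sSup_le
    · rintro r ⟨y, hy, rfl⟩
      have h1 : Vg g (fun x => π x * C x y / marginal π C y) ≤ Lift π C * Vg g π := by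
        apply Finset.sup'_le
        intro w _
        have hterm : ∀ x, π x * C x y / marginal π C y * g w x ≤ Lift π C * (π x * g w x) := by
          intro x
          have : π x * C x y / marginal π C y = π x * (C x y / marginal π C y) := by ring
          rw [this]
          calc π x * (C x y / marginal π C y) * g w x
              ≤ π x * Lift π C * g w x :=
                mul_le_mul_of_nonneg_right
                  (mul_le_mul_of_nonneg_left (hLiftge x y) (hπpos x).le) (hg w x)
            _ = Lift π C * (π x * g w x) := by ring
        calc ∑ x, π x * C x y / marginal π C y * g w x
            ≤ ∑ x, Lift π C * (π x * g w x) := Finset.sum_le_sum fun x _ => hterm x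
          _ = Lift π C * ∑ x, π x * g w x := by rw [Finset.mul_sum]
          _ ≤ Lift π C * Vg g π :=
              mul_le_mul_of_nonneg_left
                (Finset.le_sup' (fun w => ∑ x, π x * g w x) (Finset.mem_univ w)) hLiftpos.le
      exact h1.trans (mul_le_mul_of_nonneg_right hLiftleMax hVg0)
    · exact mul_nonneg hMaxpos.le hVg0
  refine ⟨key, fun hV => ?_⟩
  rw [div_le_iff₀ hV]
  exact key
end

section
/- Let Z, X, Y be finite nonempty types, D a channel from Z to X and C a channel from X to Y, and let DC denote the composed channel from Z to Y given by (DC) z y = ∑_x D z x · C x y. Let ρ be a full-support prior on Z and let π be the prior on X given by π x = ∑_z ρ z · D z x. Then Lift(ρ, DC) ≤ min { Lift(ρ, D), Lift(π, C) }. -/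
open Finset

variable {X Y W : Type*}

lemma lift_set_bdd {X Y : Type*} [Fintype X] [Fintype Y] (π : X → ℝ) (C : X → Y → ℝ) :
    BddAbove {r : ℝ | ∃ x y, 0 < π x * C x y ∧ r = C x y / marginal π C y} := by
  apply Set.Finite.bddAbove
  apply Set.Finite.subset (Set.finite_range fun p : X × Y => C p.1 p.2 / marginal π C p.2)
  rintro r ⟨x, y, -, rfl⟩
  exact ⟨(x, y), rfl⟩

lemma lift_key {X Y : Type*} [Fintype X] [Fintype Y] (π : X → ℝ) (hπ : ∀ x, 0 ≤ π x)
    (C : X → Y → ℝ) (hC0 : ∀ x y, 0 ≤ C x y)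
    {x : X} {y : Y} (hx : 0 < π x) (hy : 0 < C x y) :
    C x y ≤ Lift π C * marginal π C y := by
  have hmarg : 0 < marginal π C y :=
    lt_of_lt_of_le (mul_pos hx hy)
      (Finset.single_le_sum (fun i _ => mul_nonneg (hπ i) (hC0 i y)) (mem_univ x))
  have hle : C x y / marginal π C y ≤ Lift π C :=
    le_csSup (lift_set_bdd π C) ⟨x, y, mul_pos hx hy, rfl⟩
  calc C x y = (C x y / marginal π C y) * marginal π C y := by field_simp
  _ ≤ Lift π C * marginal π C y := mul_le_mul_of_nonneg_right hle hmarg.le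

lemma lift_nonneg {X Y : Type*} [Fintype X] [Fintype Y] (π : X → ℝ) (hπ : ∀ x, 0 ≤ π x)
    (C : X → Y → ℝ) (hC0 : ∀ x y, 0 ≤ C x y)
    {x : X} {y : Y} (hx : 0 < π x) (hy : 0 < C x y) : 0 ≤ Lift π C := by
  have hle : C x y / marginal π C y ≤ Lift π C :=
    le_csSup (lift_set_bdd π C) ⟨x, y, mul_pos hx hy, rfl⟩
  have hmarg : 0 < marginal π C y :=
    lt_of_lt_of_le (mul_pos hx hy)
      (Finset.single_le_sum (fun i _ => mul_nonneg (hπ i) (hC0 i y)) (mem_univ x))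
  exact le_trans (div_nonneg hy.le hmarg.le) hle

/-- Dalenius bound: lift of a composed channel is bounded by the lifts of its parts. -/
theorem lift_comp_le_min {Z X Y : Type*} [Fintype Z] [Nonempty Z] [Fintype X] [Nonempty X]
    [Fintype Y] [Nonempty Y]
    (D : Z → X → ℝ) (hD0 : ∀ z x, 0 ≤ D z x) (hD1 : ∀ z, ∑ x, D z x = 1)
    (C : X → Y → ℝ) (hC0 : ∀ x y, 0 ≤ C x y) (hC1 : ∀ x, ∑ y, C x y = 1)
    (ρ : Z → ℝ) (hρpos : ∀ z, 0 < ρ z) (hρ1 : ∑ z, ρ z = 1) :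
    Lift ρ (fun z y => ∑ x, D z x * C x y) ≤
      min (Lift ρ D) (Lift (fun x => ∑ z, ρ z * D z x) C) := by
  set π : X → ℝ := fun x => ∑ z, ρ z * D z x with hπdef
  set DC : Z → Y → ℝ := fun z y => ∑ x, D z x * C x y with hDCdef
  have hπ0 : ∀ x, 0 ≤ π x := fun x =>
    Finset.sum_nonneg fun z _ => mul_nonneg (hρpos z).le (hD0 z x)
  have hDC0 : ∀ z y, 0 ≤ DC z y := fun z y =>
    Finset.sum_nonneg fun x _ => mul_nonneg (hD0 z x) (hC0 x y)
  -- marginal equality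
  have hmeq : ∀ y, marginal ρ DC y = marginal π C y := by
    intro y
    simp only [marginal, hπdef, hDCdef, Finset.mul_sum, Finset.sum_mul]
    rw [Finset.sum_comm]
    exact Finset.sum_congr rfl fun x _ => Finset.sum_congr rfl fun z _ => by ring
  -- nonnegativity of the two lifts
  have hπ1 : ∑ x, π x = 1 := by
    rw [hπdef, Finset.sum_comm]
    simp [← Finset.mul_sum, hD1, hρ1]
  obtain ⟨x₀, hx₀⟩ : ∃ x, 0 < π x := by
    by_contra h
    push_neg at h
    have : ∑ x, π x ≤ 0 := Finset.sum_nonpos fun x _ => h x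
    linarith
  obtain ⟨y₀, hy₀⟩ : ∃ y, 0 < C x₀ y := by
    by_contra h
    push_neg at h
    have : ∑ y, C x₀ y ≤ 0 := Finset.sum_nonpos fun y _ => h y
    linarith [hC1 x₀]
  have z₀ : Z := Classical.arbitrary Z
  obtain ⟨x₁, hx₁⟩ : ∃ x, 0 < D z₀ x := by
    by_contra h
    push_neg at h
    have : ∑ x, D z₀ x ≤ 0 := Finset.sum_nonpos fun x _ => h x
    linarith [hD1 z₀]
  have hLD0 : 0 ≤ Lift ρ D := lift_nonneg ρ (fun z => (hρpos z).le) D hD0 (hρpos z₀) hx₁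
  have hLC0 : 0 ≤ Lift π C := lift_nonneg π hπ0 C hC0 hx₀ hy₀
  apply Real.sSup_le _ (le_min hLD0 hLC0)
  rintro r ⟨z, y, hpos, rfl⟩
  have hDCzy : 0 < DC z y := by nlinarith [hρpos z]
  have hq : 0 < marginal ρ DC y :=
    lt_of_lt_of_le hpos
      (Finset.single_le_sum (fun i _ => mul_nonneg (hρpos i).le (hDC0 i y)) (mem_univ z))
  rw [le_min_iff]
  constructor <;> rw [div_le_iff₀ hq]
  · -- bound by Lift ρ D
    have hterm : ∀ x, D z x * C x y ≤ Lift ρ D * (π x * C x y) := by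
      intro x
      rcases lt_or_eq_of_le (hD0 z x) with h | h
      · have : D z x ≤ Lift ρ D * π x := lift_key ρ (fun z => (hρpos z).le) D hD0 (hρpos z) h
        have := mul_le_mul_of_nonneg_right this (hC0 x y)
        linarith [this]
      · rw [← h]
        have := mul_nonneg hLD0 (mul_nonneg (hπ0 x) (hC0 x y))
        linarith
    calc DC z y ≤ ∑ x, Lift ρ D * (π x * C x y) :=
          Finset.sum_le_sum fun x _ => hterm x
      _ = Lift ρ D * marginal π C y := by rw [marginal, Finset.mul_sum]
      _ = Lift ρ D * marginal ρ DC y := by rw [hmeq]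
  · -- bound by Lift π C
    have hterm : ∀ x, D z x * C x y ≤ D z x * (Lift π C * marginal π C y) := by
      intro x
      rcases lt_or_eq_of_le (hD0 z x) with hDzx | hDzx
      · rcases lt_or_eq_of_le (hC0 x y) with hCxy | hCxy
        · have hπx : 0 < π x :=
            lt_of_lt_of_le (mul_pos (hρpos z) hDzx)
              (Finset.single_le_sum (fun i _ => mul_nonneg (hρpos i).le (hD0 i x)) (mem_univ z))
          exact mul_le_mul_of_nonneg_left (lift_key π hπ0 C hC0 hπx hCxy) hDzx.le
        · rw [← hCxy]
          have hm : 0 ≤ marginal π C y :=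
            Finset.sum_nonneg fun i _ => mul_nonneg (hπ0 i) (hC0 i y)
          have := mul_nonneg hDzx.le (mul_nonneg hLC0 hm)
          linarith
      · rw [← hDzx]
        simp
    calc DC z y ≤ ∑ x, D z x * (Lift π C * marginal π C y) :=
          Finset.sum_le_sum fun x _ => hterm x
      _ = (∑ x, D z x) * (Lift π C * marginal π C y) := by rw [Finset.sum_mul]
      _ = Lift π C * marginal ρ DC y := by rw [hD1 z, hmeq, one_mul]
end

section
/- Let W and X be finite nonempty types and g : W → X → ℝ a nonnegative gain function. Define the action set W* = W × X and the gain function g* : W* → X → ℝ by g* (w, x₀) x = g w x₀ if x = x₀ and g* (w, x₀) x = 0 otherwise. Then for every prior π on X, the prior g*-vulnerability equals the max-case prior g-vulnerability: max over (w, x₀) ∈ W × X of ∑_x π x · g* (w, x₀) x = max over (w, x) ∈ W × X of π x · g w x. -/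
open Finset

variable {X Y W : Type*}

/-- The max-case prior g-vulnerability is realised as an average-case g*-vulnerability. -/
theorem max_case_prior_vuln_as_g_star {W X : Type*} [Fintype W] [Nonempty W]
    [Fintype X] [Nonempty X] [DecidableEq X]
    (g : W → X → ℝ) (hg : ∀ w x, 0 ≤ g w x)
    (π : X → ℝ) (hπ0 : ∀ x, 0 ≤ π x) (hπ1 : ∑ x, π x = 1) :
    (Finset.univ.sup' Finset.univ_nonempty fun p : W × X =>
        ∑ x, π x * (if x = p.2 then g p.1 p.2 else 0))
      = Finset.univ.sup' Finset.univ_nonempty fun p : W × X => π p.2 * g p.1 p.2 := by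
  apply Finset.sup'_congr _ rfl
  intro p _
  simp [mul_ite, Finset.sum_ite_eq']
end

section
/- For every channel C from a finite nonempty type X to a finite nonempty type Y, every full-support prior π on X, every finite nonempty action set W and every nonnegative gain function g : W → X → ℝ, the average-case posterior g-vulnerability is bounded by the lift times the prior g-vulnerability: ∑_y max_w ∑_x π x · C x y · g w x ≤ Lift(π, C) · V_g(π). In particular, if V_g(π) > 0, the average-case multiplicative g-leakage L×_g(π, C) is at most Lift(π, C). -/
open Finset

variable {X Y W : Type*}

/-- Lift bounds the average-case posterior g-vulnerability (hence average-case leakage). -/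
theorem lift_bounds_avg_case_g_leakage {X Y W : Type*} [Fintype X] [Nonempty X]
    [Fintype Y] [Nonempty Y] [Fintype W] [Nonempty W]
    (C : X → Y → ℝ) (hC0 : ∀ x y, 0 ≤ C x y) (hC1 : ∀ x, ∑ y, C x y = 1)
    (π : X → ℝ) (hπpos : ∀ x, 0 < π x) (hπ1 : ∑ x, π x = 1)
    (g : W → X → ℝ) (hg : ∀ w x, 0 ≤ g w x) :
    VgPost g π C ≤ Lift π C * Vg g π ∧
    (0 < Vg g π → VgPost g π C / Vg g π ≤ Lift π C) := by
  classical
  have hpnn : ∀ y, 0 ≤ marginal π C y := fun y =>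
    Finset.sum_nonneg fun x _ => mul_nonneg (hπpos x).le (hC0 x y)
  have hple : ∀ x y, π x * C x y ≤ marginal π C y := fun x y =>
    Finset.single_le_sum (f := fun x => π x * C x y)
      (fun i _ => mul_nonneg (hπpos i).le (hC0 i y)) (Finset.mem_univ x)
  set S := {r : ℝ | ∃ x y, 0 < π x * C x y ∧ r = C x y / marginal π C y} with hS
  have hbdd : BddAbove S := by
    refine ⟨(Finset.univ.inf' Finset.univ_nonempty π)⁻¹, ?_⟩
    rintro r ⟨x, y, hpos, rfl⟩
    have hinfpos : 0 < Finset.univ.inf' Finset.univ_nonempty π := by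
      obtain ⟨x0, -, hx0⟩ := Finset.exists_mem_eq_inf' (Finset.univ_nonempty) π
      rw [hx0]; exact hπpos x0
    have hCxy : 0 < C x y := by nlinarith [hπpos x, hC0 x y]
    calc C x y / marginal π C y ≤ C x y / (π x * C x y) :=
          div_le_div_of_nonneg_left (hC0 x y) hpos (hple x y)
      _ = (π x)⁻¹ := by rw [mul_comm, ← div_div, div_self hCxy.ne', one_div]
      _ ≤ _ := by
          apply inv_anti₀ hinfpos
          exact Finset.inf'_le _ (Finset.mem_univ x)
  have hSne : S.Nonempty := by
    obtain ⟨x0⟩ := ‹Nonempty X›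
    have : ∃ y, 0 < C x0 y := by
      by_contra h
      push_neg at h
      have h0 : ∀ y, C x0 y = 0 := fun y => le_antisymm (h y) (hC0 x0 y)
      have h1 := hC1 x0
      rw [Finset.sum_congr rfl fun y _ => h0 y] at h1
      simp at h1
    obtain ⟨y0, hy0⟩ := this
    exact ⟨_, x0, y0, mul_pos (hπpos x0) hy0, rfl⟩
  have hLift0 : 0 ≤ Lift π C := by
    obtain ⟨r, x, y, hpos, rfl⟩ := hSne
    exact le_trans (div_nonneg (hC0 x y) (hpnn y)) (le_csSup hbdd ⟨x, y, hpos, rfl⟩)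
  have hkey : ∀ x y, C x y ≤ Lift π C * marginal π C y := by
    intro x y
    rcases eq_or_lt_of_le (hC0 x y) with h | h
    · rw [← h]; exact mul_nonneg hLift0 (hpnn y)
    · have hpos : 0 < π x * C x y := mul_pos (hπpos x) h
      have hpy : 0 < marginal π C y := lt_of_lt_of_le hpos (hple x y)
      have hmem : C x y / marginal π C y ≤ Lift π C :=
        le_csSup hbdd ⟨x, y, hpos, rfl⟩
      exact (div_le_iff₀ hpy).mp hmem
  have hVgnn : 0 ≤ Vg g π := by
    obtain ⟨w0⟩ := ‹Nonempty W›
    unfold Vg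
    refine le_trans (Finset.sum_nonneg fun x (_ : x ∈ Finset.univ) =>
      mul_nonneg (hπpos x).le (hg w0 x)) ?_
    exact Finset.le_sup' (fun w => ∑ x, π x * g w x) (Finset.mem_univ w0)
  have hmain : VgPost g π C ≤ Lift π C * Vg g π := by
    have hy : ∀ y, (Finset.univ.sup' Finset.univ_nonempty fun w => ∑ x, π x * C x y * g w x)
        ≤ Lift π C * marginal π C y * Vg g π := by
      intro y
      apply Finset.sup'_le
      intro w _
      calc ∑ x, π x * C x y * g w x
          ≤ ∑ x, Lift π C * marginal π C y * (π x * g w x) := by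
            apply Finset.sum_le_sum
            intro x _
            have := mul_le_mul_of_nonneg_right (hkey x y)
              (mul_nonneg (hπpos x).le (hg w x))
            calc π x * C x y * g w x = C x y * (π x * g w x) := by ring
              _ ≤ Lift π C * marginal π C y * (π x * g w x) := this
        _ = Lift π C * marginal π C y * ∑ x, π x * g w x := by
            rw [← Finset.mul_sum]
        _ ≤ Lift π C * marginal π C y * Vg g π := by
            apply mul_le_mul_of_nonneg_left _ (mul_nonneg hLift0 (hpnn y))
            exact Finset.le_sup' (fun w => ∑ x, π x * g w x) (Finset.mem_univ w)
    have hsum : ∑ y, marginal π C y = 1 := by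
      unfold marginal
      rw [Finset.sum_comm]
      simp_rw [← Finset.mul_sum, hC1, mul_one]
      exact hπ1
    calc VgPost g π C ≤ ∑ y, Lift π C * marginal π C y * Vg g π :=
          Finset.sum_le_sum fun y _ => hy y
      _ = (∑ y, marginal π C y) * (Lift π C * Vg g π) := by
          rw [Finset.sum_mul]
          exact Finset.sum_congr rfl fun y _ => by ring
      _ = Lift π C * Vg g π := by rw [hsum, one_mul]
  refine ⟨hmain, fun hV => ?_⟩
  rw [div_le_iff₀ hV]
  exact hmain
end
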